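/- arXiv:1611.01934 — 2 statements merged into one kernel-verified Lean document; each statement's English description precedes it below -/
import Mathlib

section
/- Let R = 5/6 and let S be a finite set of jobs with processing times p_j ∈ (0,1] such that ∑_{j∈S} p_j + p_{j_S} > 1 + R for some small job j_S (p_{j_S} ≤ 1/2). With z*_j = min{p_j, 5/6}, it holds that ∑_{j∈S} z*_j − 1/6 > 1. -/
/-- Feasibility case for small-to-any blocker machines: if the load of a
machine together with a small job `j_S` exceeds `1 + R` (with `R = 5/6`),
then `∑_{j∈S} min{p_j, 5/6} − 1/6 > 1`. -/
theorem smallToAny_feasibility {J : Type*} (p : J → ℝ) (S : Finset J)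
    (hp : ∀ j ∈ S, 0 < p j ∧ p j ≤ 1)
    (jS : J) (hpos : 0 < p jS) (hsmall : p jS ≤ 1/2)
    (hload : ∑ j ∈ S, p j + p jS > 1 + 5/6) :
    (∑ j ∈ S, min (p j) (5/6)) - 1/6 > 1 := by
  classical
  have hS : ∑ j ∈ S, p j > 4/3 := by linarith
  set B := S.filter (fun j => 5/6 < p j) with hB
  by_cases hcard : 2 ≤ B.card
  · have h1 : ∑ j ∈ B, min (p j) (5/6) ≤ ∑ j ∈ S, min (p j) (5/6) := by
      apply Finset.sum_le_sum_of_subset_of_nonneg (Finset.filter_subset _ _)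
      intro j hj _
      exact le_min (hp j hj).1.le (by norm_num)
    have h2 : ∑ j ∈ B, min (p j) (5/6) = B.card * (5/6) := by
      rw [Finset.sum_congr rfl (fun j hj => ?_), Finset.sum_const, nsmul_eq_mul]
      have := (Finset.mem_filter.mp hj).2
      simp [min_eq_right this.le]
    have : (2 : ℝ) ≤ B.card := by exact_mod_cast hcard
    nlinarith
  · have hc1 : (B.card : ℝ) ≤ 1 := by
      have : B.card ≤ 1 := by omega
      exact_mod_cast this
    have key : ∑ j ∈ S, (p j - min (p j) (5/6)) ≤ 1/6 := by
      have : ∑ j ∈ S, (p j - min (p j) (5/6)) = ∑ j ∈ B, (p j - 5/6) := by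
        rw [hB, Finset.sum_filter]
        apply Finset.sum_congr rfl
        intro j hj
        by_cases h : 5/6 < p j
        · simp [h, min_eq_right h.le]
        · simp [h, min_eq_left (not_lt.mp h)]
      rw [this]
      calc ∑ j ∈ B, (p j - 5/6) ≤ ∑ j ∈ B, (1/6 : ℝ) := by
            apply Finset.sum_le_sum
            intro j hj
            have := (hp j (Finset.filter_subset _ _ hj)).2
            linarith
        _ = B.card * (1/6) := by rw [Finset.sum_const, nsmul_eq_mul]
        _ ≤ 1/6 := by nlinarith
    rw [Finset.sum_sub_distrib] at key
    linarith
end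

section
/- Let R = 5/6 and z*_j = min{p_j, 5/6}. Suppose j is a big job (1/2 < p_j ≤ 1), S is a finite set of small jobs on a machine with ∑_{j'∈S} p_{j'} + p_j > 1 + R, and C is a configuration (total processing time ≤ 1) containing j. Then z*_j < ∑_{j'∈S} z*_{j'} − ∑_{j'∈S∩C} z*_{j'} = ∑_{j'∈S∖C} z*_{j'}. -/
open scoped Classical

/-- Feasibility case for machines not in the blocker tree: for a big job `j`
and a set `S` of small jobs on a machine with `p(S) + p_j > 1 + R` (`R = 5/6`),
and any configuration `C` containing `j`, the dual value `z*_j` is strictly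
less than `z*(S) − z*(S∩C) = z*(S∖C)`. -/
theorem notBlocked_feasibility {J : Type*} (p : J → ℝ) (S C : Finset J)
    (hpos : ∀ j', 0 < p j') (hle : ∀ j', p j' ≤ 1)
    (hS : ∀ j' ∈ S, p j' ≤ 1/2)
    (j : J) (hbig : 1/2 < p j)
    (hload : ∑ j' ∈ S, p j' + p j > 1 + 5/6)
    (hjC : j ∈ C) (hconf : ∑ j' ∈ C, p j' ≤ 1) :
    min (p j) (5/6) < (∑ j' ∈ S, min (p j') (5/6)) - ∑ j' ∈ S ∩ C, min (p j') (5/6) ∧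
    (∑ j' ∈ S, min (p j') (5/6)) - (∑ j' ∈ S ∩ C, min (p j') (5/6)) =
      ∑ j' ∈ S \ C, min (p j') (5/6) := by
  have hmin : ∀ j' ∈ S, min (p j') (5/6) = p j' := fun j' hj' =>
    min_eq_left (le_trans (hS j' hj') (by norm_num))
  have hsum : ∑ j' ∈ S, min (p j') (5/6) = ∑ j' ∈ S, p j' :=
    Finset.sum_congr rfl hmin
  have hsum2 : ∑ j' ∈ S ∩ C, min (p j') (5/6) = ∑ j' ∈ S ∩ C, p j' :=
    Finset.sum_congr rfl (fun j' hj' => hmin j' (Finset.mem_inter.1 hj').1)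
  have hsub : S ∩ C ⊆ C.erase j := by
    intro x hx
    rcases Finset.mem_inter.1 hx with ⟨hxS, hxC⟩
    refine Finset.mem_erase.2 ⟨?_, hxC⟩
    rintro rfl; exact absurd (hS _ hxS) (not_le.2 hbig)
  have h1 : ∑ j' ∈ S ∩ C, p j' ≤ ∑ j' ∈ C.erase j, p j' :=
    Finset.sum_le_sum_of_subset_of_nonneg hsub (fun i _ _ => (hpos i).le)
  have h2 : ∑ j' ∈ C.erase j, p j' = ∑ j' ∈ C, p j' - p j :=
    Finset.sum_erase_eq_sub hjC
  constructor
  · have : min (p j) (5/6) ≤ 5/6 := min_le_right _ _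
    rw [hsum, hsum2]
    have : ∑ j' ∈ S ∩ C, p j' ≤ 1 - p j := by linarith
    have hmj : min (p j) (5/6) ≤ 5/6 := min_le_right _ _
    linarith
  · rw [sub_eq_iff_eq_add, ← Finset.sum_union (Finset.sdiff_disjoint.mono_right Finset.inter_subset_right)]
    congr 1
    rw [Finset.sdiff_union_inter]
end
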